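/- Let A be an in-weighting on a digraph G = (V,E) with (ν_j, ν_i) ∈ E, and let Ā be an in-weighting on Ḡ = (V, E∖{(ν_j, ν_i)}) with ā_{ij} = 0 and ā_{qr} = a_{qr} for all q ≠ i and all r. Then for every vertex ν_p, all q ∈ {1,…,n}, and every m ∈ ℕ with 1 ≤ m ≤ dist(G; ν_j, ν_p), the perturbation of the m-th matrix power is concentrated on walks whose first edge enters ν_i: [Ā^m]_{pq} − [A^m]_{pq} = Φ(Ω^m(Ḡ; ν_q, ν_i, ν_p), Ā) − Φ(Ω^m(G; ν_q, ν_i, ν_p), A), where Ω^m(G; ν_q, ν_i, ν_p) denotes the set of length-m walks from ν_q to ν_p whose first edge is (ν_q, ν_i). -/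

import Mathlib

open Finset

/-- The finite set of walks of length `k` from `q` to `p` in the digraph on `Fin n`
with edge set `E`, encoded as vertex sequences `f : Fin (k+1) → Fin n`. -/
def walks (n : ℕ) (E : Finset (Fin n × Fin n)) (k : ℕ) (q p : Fin n) :
    Finset (Fin (k + 1) → Fin n) :=
  Finset.univ.filter fun f : Fin (k + 1) → Fin n =>
    (∀ i : Fin k, (f i.castSucc, f i.succ) ∈ E) ∧ f 0 = q ∧ f (Fin.last k) = p

/-- Walks of length `k` from `q` to `p` whose first edge is `(q, r)`. -/
def walksThrough (n : ℕ) (E : Finset (Fin n × Fin n)) (k : ℕ) (q r p : Fin n) :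
    Finset (Fin (k + 1) → Fin n) :=
  (walks n E k q p).filter fun f => f 1 = r

/-- Weight of a walk w.r.t. an in-weighting `A`: each edge `(u, v)` contributes `A v u`. -/
def walkWeight {n k : ℕ} (A : Matrix (Fin n) (Fin n) ℝ) (f : Fin (k + 1) → Fin n) : ℝ :=
  ∏ i : Fin k, A (f i.succ) (f i.castSucc)

/-- `Φ(Ω, A)`: sum of the weights of the walks in `Ω` w.r.t. `A`. -/
def phi {n k : ℕ} (A : Matrix (Fin n) (Fin n) ℝ) (Ω : Finset (Fin (k + 1) → Fin n)) : ℝ :=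
  ∑ f ∈ Ω, walkWeight A f

/-- Distance from `q` to `p` in the digraph: the least length of a walk, `⊤` if none. -/
noncomputable def gdist (n : ℕ) (E : Finset (Fin n × Fin n)) (q p : Fin n) : ℕ∞ :=
  ⨅ m ∈ {m : ℕ | (walks n E m q p).Nonempty}, (m : ℕ∞)

/-- Diameter of the digraph. -/
noncomputable def gdiam (n : ℕ) (E : Finset (Fin n × Fin n)) : ℕ∞ :=
  ⨆ q : Fin n, ⨆ p : Fin n, gdist n E q p

/-- `A` is an in-weighting on the digraph with edge set `E`. -/
def IsInWeighting {n : ℕ} (E : Finset (Fin n × Fin n))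
    (A : Matrix (Fin n) (Fin n) ℝ) : Prop :=
  ∀ p q : Fin n, (q, p) ∉ E → A p q = 0

/-- `Δ_{t_f}(p, k)`: jump of the `k`-th one-sided derivatives of `x_p` at `t_f`. -/
noncomputable def jump {n : ℕ} (x : ℝ → Fin n → ℝ) (tf : ℝ) (p : Fin n) (k : ℕ) : ℝ :=
  iteratedDerivWithin k (fun t => x t p) (Set.Ici tf) tf
    - iteratedDerivWithin k (fun t => x t p) (Set.Iic tf) tf

/-!
Both matrix powers expand as sums of walk weights, over the walks of `G` and of `Ḡ`
respectively. A walk of length `m ≤ dist(G; ν_j, ν_p)` can visit `ν_i` only at its first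
step: otherwise the edge `(ν_j, ν_i)` followed by the rest of the walk would reach `ν_p` from
`ν_j` in fewer than `m` steps. Hence a walk whose first edge does not enter `ν_i` never uses
the edge `(ν_j, ν_i)` and never picks up an entry from row `i`; such walks are the same in
`G` and `Ḡ`, carry the same weights under `A` and `Ā`, and cancel in the difference.
-/

section Walks

variable {n : ℕ} {E : Finset (Fin n × Fin n)}

lemma mem_walks {k : ℕ} {q p : Fin n} {f : Fin (k + 1) → Fin n} :
    f ∈ walks n E k q p ↔
      (∀ t : Fin k, (f t.castSucc, f t.succ) ∈ E) ∧ f 0 = q ∧ f (Fin.last k) = p := by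
  simp [walks]

lemma walks_mono {E' : Finset (Fin n × Fin n)} (h : E ⊆ E') (k : ℕ) (q p : Fin n) :
    walks n E k q p ⊆ walks n E' k q p := fun _ hf =>
  let ⟨hedge, hends⟩ := mem_walks.1 hf
  mem_walks.2 ⟨fun t => h (hedge t), hends⟩

lemma cons_mem_walks {k : ℕ} {j q p : Fin n} {g : Fin (k + 1) → Fin n} (hjq : (j, q) ∈ E)
    (hg : g ∈ walks n E k q p) : (Fin.cons j g : Fin (k + 2) → Fin n) ∈ walks n E (k + 1) j p := by
  obtain ⟨hedge, rfl, rfl⟩ := mem_walks.1 hg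
  refine mem_walks.2 ⟨Fin.cases hjq fun t => ?_, rfl, by rw [← Fin.succ_last, Fin.cons_succ]⟩
  simpa [← Fin.succ_castSucc] using hedge t

lemma suffix_mem_walks {m k s : ℕ} (hsk : s + k = m) {q p : Fin n} {f : Fin (m + 1) → Fin n}
    (hf : f ∈ walks n E m q p) :
    (fun t : Fin (k + 1) => f ⟨s + t, by omega⟩) ∈ walks n E k (f ⟨s, by omega⟩) p := by
  obtain ⟨hedge, -, rfl⟩ := mem_walks.1 hf
  exact mem_walks.2 ⟨fun t => hedge ⟨s + t, by omega⟩, rfl, by congr 1; ext; simp; omega⟩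

lemma mem_walks_erase_iff {k : ℕ} {j i q p : Fin n} {f : Fin (k + 1) → Fin n}
    (h : ∀ t : Fin k, f t.succ ≠ i) :
    f ∈ walks n (E.erase (j, i)) k q p ↔ f ∈ walks n E k q p := by
  simp only [mem_walks, mem_erase, ne_eq, Prod.ext_iff, not_and]
  exact and_congr_left' (forall_congr' fun t => and_iff_right_of_imp fun _ _ => h t)

lemma gdist_le_of_mem_walks {k : ℕ} {q p : Fin n} {f : Fin (k + 1) → Fin n}
    (hf : f ∈ walks n E k q p) : gdist n E q p ≤ k :=
  iInf₂_le k ⟨f, hf⟩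

lemma walkWeight_cons {k : ℕ} (B : Matrix (Fin n) (Fin n) ℝ) (r : Fin n)
    (g : Fin (k + 1) → Fin n) :
    walkWeight B (Fin.cons r g : Fin (k + 2) → Fin n) = B (g 0) r * walkWeight B g := by
  simp [walkWeight, Fin.prod_univ_succ]

lemma walkWeight_eq_of_succ_ne {k : ℕ} {A B : Matrix (Fin n) (Fin n) ℝ} {i : Fin n}
    (hrow : ∀ q r : Fin n, q ≠ i → B q r = A q r) {f : Fin (k + 1) → Fin n}
    (h : ∀ t : Fin k, f t.succ ≠ i) : walkWeight B f = walkWeight A f :=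
  prod_congr rfl fun t _ => hrow _ _ (h t)

lemma pow_apply_eq_sum_walkWeight (B : Matrix (Fin n) (Fin n) ℝ) (m : ℕ) (q p : Fin n) :
    (B ^ m) p q = ∑ f : Fin (m + 1) → Fin n with f 0 = q ∧ f (Fin.last m) = p,
      walkWeight B f := by
  induction m generalizing q with
  | zero =>
    rw [sum_filter, ← (Equiv.funUnique (Fin 1) (Fin n)).symm.sum_comp]
    simp [walkWeight, Matrix.one_apply, ite_and, eq_comm]
  | succ m ih =>
    calc (B ^ (m + 1)) p q = ∑ r, (B ^ m) p r * B r q := by rw [pow_succ, Matrix.mul_apply]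
    _ = ∑ r, ∑ g ∈ {g : Fin (m + 1) → Fin n | g (Fin.last m) = p} with g 0 = r,
          B (g 0) q * walkWeight B g := by
      refine sum_congr rfl fun r _ => ?_
      rw [ih, sum_mul, filter_filter]
      refine sum_congr (by ext; simp [and_comm]) fun g hg => ?_
      rw [(mem_filter.1 hg).2.2, mul_comm]
    _ = ∑ g : Fin (m + 1) → Fin n with g (Fin.last m) = p, B (g 0) q * walkWeight B g :=
      sum_fiberwise _ _ _
    _ = ∑ f : Fin (m + 2) → Fin n with f 0 = q ∧ f (Fin.last (m + 1)) = p, walkWeight B f := by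
      rw [sum_filter, sum_filter, ← (Fin.consEquiv fun _ : Fin (m + 2) => Fin n).sum_comp,
        Fintype.sum_prod_type, sum_comm]
      simp [Fin.consEquiv, walkWeight_cons, ← Fin.succ_last, ite_and, sum_ite_eq']

lemma IsInWeighting.pow_apply_eq_phi_walks {B : Matrix (Fin n) (Fin n) ℝ}
    (hB : IsInWeighting E B) (m : ℕ) (q p : Fin n) :
    (B ^ m) p q = phi B (walks n E m q p) := by
  rw [pow_apply_eq_sum_walkWeight, phi]
  refine (sum_subset (fun f hf => ?_) fun f _ hf => ?_).symm
  · obtain ⟨-, hends⟩ := mem_walks.1 hf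
    simpa using hends
  · obtain ⟨t, ht⟩ : ∃ t : Fin m, (f t.castSucc, f t.succ) ∉ E := by
      by_contra! h
      simp_all [mem_walks]
    exact prod_eq_zero (mem_univ t) (hB _ _ ht)

lemma phi_walks_eq_add {m : ℕ} (B : Matrix (Fin n) (Fin n) ℝ) (q r p : Fin n) :
    phi B (walks n E m q p) =
      phi B (walksThrough n E m q r p) + phi B ((walks n E m q p).filter (· 1 ≠ r)) :=
  (sum_filter_add_sum_filter_not _ _ _).symm

lemma apply_ne_of_two_le_of_le_gdist {j i p q : Fin n} (hE : (j, i) ∈ E) {m : ℕ}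
    (hm : (m : ℕ∞) ≤ gdist n E j p) {f : Fin (m + 1) → Fin n} (hf : f ∈ walks n E m q p)
    (s : Fin (m + 1)) (hs : 2 ≤ (s : ℕ)) : f s ≠ i := by
  intro hfs
  have hsuffix := suffix_mem_walks (s := s) (k := m - s) (by omega) hf
  rw [Fin.eta, hfs] at hsuffix
  have hshort := gdist_le_of_mem_walks (cons_mem_walks hE hsuffix)
  have : ((m - s + 1 : ℕ) : ℕ∞) < m := by norm_cast; omega
  exact not_lt_of_ge (hm.trans hshort) this

lemma succ_apply_ne_of_le_gdist {j i p q : Fin n} (hE : (j, i) ∈ E) {m : ℕ}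
    (hm : (m : ℕ∞) ≤ gdist n E j p) {f : Fin (m + 1) → Fin n} (hf : f ∈ walks n E m q p)
    (h1 : f 1 ≠ i) (t : Fin m) : f t.succ ≠ i := by
  rcases Nat.eq_zero_or_pos t with ht | ht
  · convert h1
    ext
    rw [Fin.val_succ, ht, Fin.val_one', Nat.mod_eq_of_lt (by omega)]
  · exact apply_ne_of_two_le_of_le_gdist hE hm hf t.succ (by simp; omega)

lemma filter_walks_erase_eq {j i p q : Fin n} (hE : (j, i) ∈ E) {m : ℕ}
    (hm : (m : ℕ∞) ≤ gdist n E j p) :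
    (walks n (E.erase (j, i)) m q p).filter (· 1 ≠ i) = (walks n E m q p).filter (· 1 ≠ i) := by
  ext f
  simp only [mem_filter]
  constructor
  · rintro ⟨hf, h1⟩
    exact ⟨walks_mono (erase_subset _ _) m q p hf, h1⟩
  · rintro ⟨hf, h1⟩
    exact ⟨(mem_walks_erase_iff (succ_apply_ne_of_le_gdist hE hm hf h1)).2 hf, h1⟩

end Walks

theorem pow_perturbation_through_head_general {n : ℕ} (E : Finset (Fin n × Fin n))
    (A Abar : Matrix (Fin n) (Fin n) ℝ)
    (j i p : Fin n) (hE : (j, i) ∈ E)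
    (hA : IsInWeighting E A)
    (hAbar : IsInWeighting (E.erase (j, i)) Abar)
    (hrow : ∀ q r : Fin n, q ≠ i → Abar q r = A q r) :
    ∀ q : Fin n, ∀ m : ℕ, 1 ≤ m → (m : ℕ∞) ≤ gdist n E j p →
      (Abar ^ m) p q - (A ^ m) p q =
        phi Abar (walksThrough n (E.erase (j, i)) m q i p)
          - phi A (walksThrough n E m q i p) := by
  intro q m _ hm
  have havoiding : phi Abar ((walks n E m q p).filter (· 1 ≠ i)) =
      phi A ((walks n E m q p).filter (· 1 ≠ i)) :=
    sum_congr rfl fun f hf =>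
      let ⟨hf, h1⟩ := mem_filter.1 hf
      walkWeight_eq_of_succ_ne hrow (succ_apply_ne_of_le_gdist hE hm hf h1)
  rw [hA.pow_apply_eq_phi_walks, hAbar.pow_apply_eq_phi_walks, phi_walks_eq_add Abar q i,
    phi_walks_eq_add A q i, filter_walks_erase_eq hE hm, havoiding]
  ring

/-- under the failed-link setup, for `1 ≤ m ≤ dist(G; j, p)` the
perturbation of the `m`-th matrix power is concentrated on the walks whose first
edge enters `i`:
`[Ā^m]_{pq} - [A^m]_{pq} = Φ(Ω^m(Ḡ; q, i, p), Ā) - Φ(Ω^m(G; q, i, p), A)`. -/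
theorem pow_perturbation_through_head {n : ℕ} (E : Finset (Fin n × Fin n))
    (A Abar : Matrix (Fin n) (Fin n) ℝ)
    (j i p : Fin n) (hE : (j, i) ∈ E)
    (hA : IsInWeighting E A)
    (hAbar : IsInWeighting (E.erase (j, i)) Abar)
    (hij : Abar i j = 0)
    (hrow : ∀ q r : Fin n, q ≠ i → Abar q r = A q r) :
    ∀ q : Fin n, ∀ m : ℕ, 1 ≤ m → (m : ℕ∞) ≤ gdist n E j p →
      (Abar ^ m) p q - (A ^ m) p q =
        phi Abar (walksThrough n (E.erase (j, i)) m q i p)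
          - phi A (walksThrough n E m q i p) :=
  pow_perturbation_through_head_general E A Abar j i p hE hA hAbar hrow
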